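/- Let N be an odd positive integer and S a 2×2 matrix over ZMod N with determinant 1. Then there exists a unitary operator μ(S) on ℂ^N such that μ(S)·A(a)·μ(S)† = A(S·a) for all a ∈ (ZMod N)². -/

import Mathlib

open Matrix BigOperators

noncomputable section

/-- `ω = exp(2πi/N)`, a primitive `N`-th root of unity. -/
def omegaN (N : ℕ) : ℂ := Complex.exp (2 * Real.pi * Complex.I / N)

/-- The shift operator `x(q)|k⟩ = |k+q⟩`. -/
def shiftOp (N : ℕ) [NeZero N] (q : ZMod N) : Matrix (ZMod N) (ZMod N) ℂ :=
  Matrix.of fun k l => if k = l + q then 1 else 0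

/-- The boost operator `z(p)|k⟩ = ω^{pk}|k⟩`. -/
def boostOp (N : ℕ) [NeZero N] (p : ZMod N) : Matrix (ZMod N) (ZMod N) ℂ :=
  Matrix.diagonal fun k => omegaN N ^ (p * k).val

/-- The Weyl operator `w(p,q) = ω^{−2⁻¹pq} z(p) x(q)`. -/
def weylOp (N : ℕ) [NeZero N] (p q : ZMod N) : Matrix (ZMod N) (ZMod N) ℂ :=
  omegaN N ^ ((-(2⁻¹ : ZMod N) * p * q).val) • (boostOp N p * shiftOp N q)

/-- The parity operator `A(0,0)|x⟩ = |−x⟩`. -/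
def parityOp (N : ℕ) [NeZero N] : Matrix (ZMod N) (ZMod N) ℂ :=
  Matrix.of fun k l => if k = -l then 1 else 0

/-- The phase space operators `A(p,q) = w(p,q) A(0,0) w(p,q)†`. -/
def phaseOp (N : ℕ) [NeZero N] (a : ZMod N × ZMod N) : Matrix (ZMod N) (ZMod N) ℂ :=
  weylOp N a.1 a.2 * parityOp N * (weylOp N a.1 a.2)ᴴ

/-- The discrete Wigner function `W_X(v) = (1/N)·tr(A(v)·X)`. -/
def wigner (N : ℕ) [NeZero N] (X : Matrix (ZMod N) (ZMod N) ℂ) (v : ZMod N × ZMod N) : ℂ :=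
  (1 / (N : ℂ)) * (phaseOp N v * X).trace

/-- The action of a 2×2 matrix over `ZMod N` on `(ZMod N)²` as a column vector. -/
def matAct (N : ℕ) (S : Matrix (Fin 2) (Fin 2) (ZMod N)) (a : ZMod N × ZMod N) :
    ZMod N × ZMod N :=
  (S 0 0 * a.1 + S 0 1 * a.2, S 1 0 * a.1 + S 1 1 * a.2)

/-!
The matrices `S` for which some unitary `U` satisfies `U A(a) U† = A(S a)` for all `a` form a
monoid. It contains every shear `!![1, t; 0, 1]`, implemented by the chirp
`diag (ω^(2⁻¹ t k²))` (this is where `N` odd enters), and `J = !![0, 1; -1, 0]`, implemented by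
the unitary discrete Fourier transform; both facts follow from the explicit matrix entries
`A(p, q)ₖₗ = [k + l = 2q] ω^(p(k - l))`. Shears and `J` generate `SL₂(ℤ/N)`: since `ℤ/N` has
stable range one, a shear turns the first column into one with a unit top entry, and a matrix
with unit top-left entry is a lower shear times an upper shear times a diagonal matrix, where
lower shears and diagonal matrices are words in shears and `J`.
-/

namespace Matrix

variable {R : Type*} [CommRing R]

lemma lower_unipotent_eq (t : R) : !![1, 0; t, 1]
    = !![0, 1; -1, 0] * !![1, -t; 0, 1] * !![0, 1; -1, 0] * !![0, 1; -1, 0] * !![0, 1; -1, 0] := by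
  simp

lemma diagonal_fin_two_eq {u v : R} (h : u * v = 1) : !![u, 0; 0, v]
    = !![1, -u; 0, 1] * !![1, 0; v, 1] * !![1, -u; 0, 1] * !![0, 1; -1, 0] := by
  simp only [mul_fin_two, EmbeddingLike.apply_eq_iff_eq, vecCons_inj, and_true]
  exact ⟨⟨by linear_combination u * h, by linear_combination h⟩, by linear_combination -h, by ring⟩

lemma eq_lower_mul_upper_mul_diagonal {a b c d v : R} (hdet : a * d - b * c = 1)
    (hv : a * v = 1) :
    !![a, b; c, d] = !![1, 0; c * v, 1] * !![1, b * a; 0, 1] * !![a, 0; 0, v] := by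
  simp only [mul_fin_two, EmbeddingLike.apply_eq_iff_eq, vecCons_inj, and_true]
  exact ⟨⟨by ring, by linear_combination -b * hv⟩, by linear_combination -c * hv,
    by linear_combination (-(c * b * v) - d) * hv + v * hdet⟩

lemma upper_mul_fin_two (t a b c d : R) :
    !![1, t; 0, 1] * !![a, b; c, d] = !![a + t * c, b + t * d; c, d] := by
  simp

lemma mem_submonoid_of_isUnit_of_det_eq_one {M : Submonoid (Matrix (Fin 2) (Fin 2) R)}
    (hU : ∀ t, !![1, t; 0, 1] ∈ M) (hJ : !![0, 1; -1, 0] ∈ M) {a b c d : R}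
    (hdet : a * d - b * c = 1) (ha : IsUnit a) : !![a, b; c, d] ∈ M := by
  have hL : ∀ t, !![1, 0; t, 1] ∈ M := fun t => by
    rw [lower_unipotent_eq]
    exact M.mul_mem (M.mul_mem (M.mul_mem (M.mul_mem hJ (hU _)) hJ) hJ) hJ
  obtain ⟨v, hv⟩ := ha.exists_right_inv
  rw [eq_lower_mul_upper_mul_diagonal hdet hv, diagonal_fin_two_eq hv]
  exact M.mul_mem (M.mul_mem (hL _) (hU _))
    (M.mul_mem (M.mul_mem (M.mul_mem (hU _) (hL _)) (hU _)) hJ)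

theorem mem_submonoid_of_det_eq_one
    (hR : ∀ a c : R, IsCoprime a c → ∃ t, IsUnit (a + t * c))
    {M : Submonoid (Matrix (Fin 2) (Fin 2) R)}
    (hU : ∀ t, !![1, t; 0, 1] ∈ M) (hJ : !![0, 1; -1, 0] ∈ M) {S : Matrix (Fin 2) (Fin 2) R}
    (hS : S.det = 1) : S ∈ M := by
  rw [det_fin_two] at hS
  obtain ⟨t, ht⟩ := hR (S 0 0) (S 1 0) ⟨S 1 1, -S 0 1, by linear_combination hS⟩
  have hUS : !![1, t; 0, 1] * S ∈ M := by
    rw [eta_fin_two S, upper_mul_fin_two]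
    exact mem_submonoid_of_isUnit_of_det_eq_one hU hJ (by linear_combination hS) ht
  have hinv : !![1, -t; 0, 1] * !![1, t; 0, 1] = 1 := by
    simp [one_fin_two]
  simpa only [← mul_assoc, hinv, one_mul] using M.mul_mem (hU (-t)) hUS

end Matrix

theorem ZMod.exists_isUnit_add_mul {N : ℕ} [NeZero N] {a c : ZMod N} (h : IsCoprime a c) :
    ∃ t : ZMod N, IsUnit (a + t * c) := by
  classical
  -- `a + T * c` is nonzero modulo every prime `p ∣ N`: if `p ∣ a` then `p ∤ T` and `p ∤ c`,
  -- otherwise `p ∣ T`.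
  set T := ∏ p ∈ N.primeFactors with ¬ p ∣ a.val, p
  have hcop : ∀ p : ℕ, p.Prime → p ∣ N → ¬ (p ∣ a.val ∧ p ∣ c.val) := by
    rintro p hp hpN ⟨hpa, hpc⟩
    have : Fact p.Prime := ⟨hp⟩
    have hmap := h.map (ZMod.castHom hpN (ZMod p))
    rw [← ZMod.natCast_zmod_val a, ← ZMod.natCast_zmod_val c, map_natCast, map_natCast,
      (ZMod.natCast_eq_zero_iff _ _).2 hpa, (ZMod.natCast_eq_zero_iff _ _).2 hpc,
      isCoprime_zero_left, isUnit_zero_iff] at hmap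
    exact zero_ne_one hmap
  refine ⟨T, ?_⟩
  have hT : a + T * c = ((a.val + T * c.val : ℕ) : ZMod N) := by simp
  rw [hT, ZMod.isUnit_iff_coprime]
  refine Nat.coprime_of_dvd fun p hp hpsum hpN => ?_
  by_cases hpa : p ∣ a.val
  · have hpT : ¬ p ∣ T := fun hpT => by
      obtain ⟨q, hq, hpq⟩ := (Nat.prime_iff.mp hp).exists_mem_finset_dvd hpT
      rw [Finset.mem_filter, Nat.mem_primeFactors] at hq
      exact hq.2 ((Nat.prime_dvd_prime_iff_eq hp hq.1.1).1 hpq ▸ hpa)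
    have hpc : ¬ p ∣ c.val := fun hpc => hcop p hp hpN ⟨hpa, hpc⟩
    exact (Nat.Prime.dvd_mul hp).not.2 (not_or.2 ⟨hpT, hpc⟩) ((Nat.dvd_add_right hpa).1 hpsum)
  · have hpT : p ∣ T :=
      Finset.dvd_prod_of_mem _ (by simp [Nat.mem_primeFactors, hp, hpN, hpa, NeZero.ne N])
    exact hpa ((Nat.dvd_add_left (hpT.mul_right _)).1 hpsum)

open ZMod (stdAddChar stdAddChar_apply toCircle_apply isPrimitive_stdAddChar)

section PhaseSpace

variable {N : ℕ}

lemma matAct_of (a b c d p q : ZMod N) :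
    matAct N !![a, b; c, d] (p, q) = (a * p + b * q, c * p + d * q) :=
  rfl

lemma matAct_one (a : ZMod N × ZMod N) : matAct N 1 a = a := by
  simp [matAct]

lemma matAct_mul (S T : Matrix (Fin 2) (Fin 2) (ZMod N)) (a : ZMod N × ZMod N) :
    matAct N (S * T) a = matAct N S (matAct N T a) := by
  simp only [matAct, mul_apply, Fin.sum_univ_two, Prod.mk.injEq]
  constructor <;> ring

variable [NeZero N]

lemma omegaN_pow_val (m : ZMod N) : omegaN N ^ m.val = stdAddChar m := by
  rw [stdAddChar_apply, toCircle_apply, omegaN, ← Complex.exp_nat_mul]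
  ring_nf

lemma weylOp_apply (p q k l : ZMod N) :
    weylOp N p q k l = if k = l + q then stdAddChar (-2⁻¹ * p * q + p * k) else 0 := by
  simp [weylOp, boostOp, shiftOp, diagonal_mul, omegaN_pow_val, AddChar.map_add_eq_mul]

lemma phaseOp_apply (p q k l : ZMod N) :
    phaseOp N (p, q) k l = if k + l = 2 * q then stdAddChar (p * (k - l)) else 0 := by
  have hcond : ∀ n, k = -n + q ↔ n = q - k := fun n => by
    constructor <;> intro h <;> linear_combination h
  simp only [phaseOp, mul_apply, parityOp, of_apply, mul_ite, mul_one, mul_zero, Finset.sum_ite_eq',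
    Finset.mem_univ, if_true, conjTranspose_apply, weylOp_apply, hcond]
  rw [Finset.sum_eq_single (q - k) (fun n _ hn => by simp [hn]) (by simp)]
  have hcond' : l = q - k + q ↔ k + l = 2 * q := by constructor <;> intro h <;> linear_combination h
  simp only [if_true, hcond', apply_ite star, star_zero, mul_ite, mul_zero]
  congr 1
  rw [RCLike.star_def, ← AddChar.map_neg_eq_conj, ← AddChar.map_add_eq_mul]
  ring_nf

variable (N) in
def unitarilyImplemented : Submonoid (Matrix (Fin 2) (Fin 2) (ZMod N)) where
  carrier := {S | ∃ U ∈ unitaryGroup (ZMod N) ℂ,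
    ∀ a, U * phaseOp N a * Uᴴ = phaseOp N (matAct N S a)}
  one_mem' := ⟨1, one_mem _, fun a => by simp [matAct_one]⟩
  mul_mem' := by
    rintro S T ⟨U, hU, hSU⟩ ⟨V, hV, hTV⟩
    refine ⟨U * V, mul_mem hU hV, fun a => ?_⟩
    rw [matAct_mul, ← hSU, ← hTV, conjTranspose_mul]
    simp only [Matrix.mul_assoc]

variable (N) in
def chirpMatrix (t : ZMod N) : Matrix (ZMod N) (ZMod N) ℂ :=
  diagonal fun k => stdAddChar (2⁻¹ * t * (k * k))

lemma chirpMatrix_mem_unitaryGroup (t : ZMod N) : chirpMatrix N t ∈ unitaryGroup (ZMod N) ℂ := by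
  rw [mem_unitaryGroup_iff, star_eq_conjTranspose, chirpMatrix, diagonal_conjTranspose,
    diagonal_mul_diagonal, ← diagonal_one]
  congr 1
  ext k
  simp [RCLike.star_def, ← AddChar.map_neg_eq_conj, ← AddChar.map_add_eq_mul]

lemma chirpMatrix_conj_phaseOp (h2 : (2 : ZMod N) * 2⁻¹ = 1) (t : ZMod N) (a : ZMod N × ZMod N) :
    chirpMatrix N t * phaseOp N a * (chirpMatrix N t)ᴴ = phaseOp N (matAct N !![1, t; 0, 1] a) := by
  obtain ⟨p, q⟩ := a
  rw [matAct_of, one_mul, zero_mul, zero_add, one_mul]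
  ext k l
  simp only [chirpMatrix, diagonal_conjTranspose, mul_diagonal, diagonal_mul, phaseOp_apply,
    mul_ite, ite_mul, mul_zero, zero_mul]
  split_ifs with h
  · rw [Pi.star_apply, RCLike.star_def, ← AddChar.map_neg_eq_conj, ← AddChar.map_add_eq_mul,
    ← AddChar.map_add_eq_mul]
    congr 1
    linear_combination (2⁻¹ * t * (k - l)) * h + (t * (k - l) * q) * h2
  · rfl

lemma sum_stdAddChar_mul (b : ZMod N) :
    ∑ x : ZMod N, stdAddChar (x * b) = if b = 0 then (N : ℂ) else 0 := by
  rw [AddChar.sum_mulShift b (isPrimitive_stdAddChar N), ZMod.card, Nat.cast_ite, Nat.cast_zero]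

lemma conj_phaseOp_apply (U : Matrix (ZMod N) (ZMod N) ℂ) (p q k l : ZMod N) :
    (U * phaseOp N (p, q) * Uᴴ) k l
      = ∑ n, U k (2 * q - n) * stdAddChar (p * (2 * q - n - n)) * star (U l n) := by
  simp only [mul_apply, Finset.sum_mul, phaseOp_apply, conjTranspose_apply, mul_ite, mul_zero,
    ite_mul, zero_mul]
  refine Finset.sum_congr rfl fun n _ => ?_
  rw [Finset.sum_eq_single (2 * q - n)
    (fun m _ hm => if_neg fun h => hm (eq_sub_of_add_eq h)) (by simp)]
  simp

variable (N) in
def dftMatrix : Matrix (ZMod N) (ZMod N) ℂ :=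
  of fun k l => ((√N)⁻¹ : ℝ) * stdAddChar (k * l)

lemma inv_sqrt_mul_inv_sqrt_mul_self : ((√N)⁻¹ : ℝ) * ((√N)⁻¹ : ℝ) * (N : ℂ) = 1 := by
  have h : ((√N)⁻¹ * (√N)⁻¹ : ℝ) = (N : ℝ)⁻¹ := by
    rw [← mul_inv, Real.mul_self_sqrt (Nat.cast_nonneg N)]
  rw [← Complex.ofReal_mul, h, Complex.ofReal_inv, Complex.ofReal_natCast]
  exact inv_mul_cancel₀ (Nat.cast_ne_zero.2 (NeZero.ne N))

lemma dftMatrix_mem_unitaryGroup : dftMatrix N ∈ unitaryGroup (ZMod N) ℂ := by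
  rw [mem_unitaryGroup_iff, star_eq_conjTranspose]
  ext k l
  have hterm : ∀ m, dftMatrix N k m * (dftMatrix N)ᴴ m l
      = ((√N)⁻¹ : ℝ) * ((√N)⁻¹ : ℝ) * stdAddChar (m * (k - l)) := fun m => by
    rw [conjTranspose_apply, dftMatrix, of_apply, of_apply, RCLike.star_def,
      map_mul (starRingEnd ℂ), Complex.conj_ofReal, ← AddChar.map_neg_eq_conj, mul_mul_mul_comm,
      ← AddChar.map_add_eq_mul]
    ring_nf
  simp only [mul_apply, hterm, ← Finset.mul_sum, sum_stdAddChar_mul, sub_eq_zero, one_apply]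
  split_ifs
  · exact inv_sqrt_mul_inv_sqrt_mul_self
  · exact mul_zero _

lemma dftMatrix_conj_phaseOp (a : ZMod N × ZMod N) :
    dftMatrix N * phaseOp N a * (dftMatrix N)ᴴ = phaseOp N (matAct N !![0, 1; -1, 0] a) := by
  obtain ⟨p, q⟩ := a
  rw [matAct_of]
  simp only [zero_mul, one_mul, zero_add, neg_mul, add_zero]
  ext k l
  have hterm : ∀ n, dftMatrix N k (2 * q - n) * stdAddChar (p * (2 * q - n - n))
      * star (dftMatrix N l n) = ((√N)⁻¹ : ℝ) * ((√N)⁻¹ : ℝ) * stdAddChar (2 * q * (k + p))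
        * stdAddChar (n * -(k + l + 2 * p)) := fun n => by
    rw [dftMatrix, of_apply, of_apply, RCLike.star_def, map_mul (starRingEnd ℂ),
      Complex.conj_ofReal, ← AddChar.map_neg_eq_conj]
    calc _ = ((√N)⁻¹ : ℝ) * ((√N)⁻¹ : ℝ) * (stdAddChar (k * (2 * q - n))
          * stdAddChar (p * (2 * q - n - n)) * stdAddChar (-(l * n))) := by ring
      _ = ((√N)⁻¹ : ℝ) * ((√N)⁻¹ : ℝ) * (stdAddChar (2 * q * (k + p))
          * stdAddChar (n * -(k + l + 2 * p))) := by
        simp only [← AddChar.map_add_eq_mul]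
        ring_nf
      _ = _ := by ring
  have hcond : -(k + l + 2 * p) = 0 ↔ k + l = 2 * -p := by
    constructor <;> intro h <;> linear_combination -h
  simp only [conj_phaseOp_apply, hterm, ← Finset.mul_sum, sum_stdAddChar_mul, hcond, mul_ite,
    mul_zero, phaseOp_apply]
  split_ifs with h
  · rw [mul_right_comm, inv_sqrt_mul_inv_sqrt_mul_self, one_mul]
    congr 1
    linear_combination q * h
  · rfl

end PhaseSpace

/-- for odd `N` and any 2×2 matrix `S` over `ZMod N` with `det S = 1`,
there is a unitary `μ(S)` on `ℂ^N` with `μ(S)·A(a)·μ(S)† = A(S·a)` for all `a`. -/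
theorem exists_metaplectic (N : ℕ) [NeZero N] (hN : Odd N)
    (S : Matrix (Fin 2) (Fin 2) (ZMod N)) (hS : S.det = 1) :
    ∃ U : Matrix (ZMod N) (ZMod N) ℂ, U ∈ Matrix.unitaryGroup (ZMod N) ℂ ∧
      ∀ a : ZMod N × ZMod N, U * phaseOp N a * Uᴴ = phaseOp N (matAct N S a) := by
  have h2 : (2 : ZMod N) * 2⁻¹ = 1 := ZMod.mul_inv_of_unit _ <| by
    exact_mod_cast (ZMod.isUnit_iff_coprime 2 N).2 (Nat.coprime_two_left.2 hN)
  have hU : ∀ t, !![1, t; 0, 1] ∈ unitarilyImplemented N := fun t =>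
    ⟨chirpMatrix N t, chirpMatrix_mem_unitaryGroup t, chirpMatrix_conj_phaseOp h2 t⟩
  have hJ : !![0, 1; -1, 0] ∈ unitarilyImplemented N :=
    ⟨dftMatrix N, dftMatrix_mem_unitaryGroup, dftMatrix_conj_phaseOp⟩
  exact mem_submonoid_of_det_eq_one (fun _ _ => ZMod.exists_isUnit_add_mul) hU hJ hS
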